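/- Let Y have the k-truncated Poisson distribution of parameter λ, let A > B > e be constants with A/e ≥ B, and let p be a fixed nonnegative integer. Then there is a constant C (depending on A, B, p, k only) such that for all integers j ≥ max{Aeλ, k}, E[[Y]_p · 1_{Y ≥ j}] ≤ C · B^{−j}, where [Y]_p = Y(Y−1)⋯(Y−p+1). -/

import Mathlib

open Real

/-- `fk k x = ∑_{i ≥ k} x^i / i!`. -/
noncomputable def fk (k : ℕ) (x : ℝ) : ℝ :=
  ∑' i : ℕ, if k ≤ i then x ^ i / (Nat.factorial i : ℝ) else 0

/-! Since `fk k l ≥ l^k / k!`, `P(Y = i) ≤ k! l^(i-k) / i!`, and for `i ≥ A e l` the crude Stirling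
bound `i^i ≤ e^i i!` turns this into `k! (A e)^k A⁻ⁱ`, uniformly in `l`. Writing
`A⁻ⁱ = (B/A)^i B⁻ⁱ ≤ (B/A)^i B⁻ʲ` for `i ≥ j` and `[i]_p ≤ i^p`, the tail sum is at most
`k! (A e)^k (∑ i^p (B/A)^i) B⁻ʲ`. -/

open Nat

/-- The point mass `P(Y = i)` of `Y ∼ TPo_k(l)`. -/
noncomputable def truncPoissonPMF (k : ℕ) (l : ℝ) (i : ℕ) : ℝ :=
  if k ≤ i then l ^ i / (fk k l * (Nat.factorial i : ℝ)) else 0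

lemma pow_div_factorial_le_fk {x : ℝ} (hx : 0 ≤ x) (k : ℕ) : x ^ k / k ! ≤ fk k x := by
  have hsum : Summable fun i : ℕ => if k ≤ i then x ^ i / (i ! : ℝ) else 0 :=
    (summable_pow_div_factorial x).of_nonneg_of_le (fun i => by split_ifs <;> positivity)
      (fun i => by split_ifs <;> first | exact le_rfl | positivity)
  simpa [fk] using hsum.le_tsum k (fun i _ => by positivity)

lemma fk_pos {x : ℝ} (hx : 0 < x) (k : ℕ) : 0 < fk k x :=
  (by positivity : 0 < x ^ k / k !).trans_le (pow_div_factorial_le_fk hx.le k)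

lemma truncPoissonPMF_nonneg {l : ℝ} (hl : 0 < l) (k i : ℕ) : 0 ≤ truncPoissonPMF k l i := by
  have := fk_pos hl k
  unfold truncPoissonPMF
  split_ifs <;> positivity

lemma pow_le_exp_mul_factorial {m n : ℕ} (hmn : m ≤ n) : (n : ℝ) ^ m ≤ exp n * n ! := by
  rcases n.eq_zero_or_pos with rfl | hn
  · simp [Nat.le_zero.1 hmn]
  calc (n : ℝ) ^ m ≤ (n : ℝ) ^ n := pow_le_pow_right₀ (one_le_cast.2 hn) hmn
    _ ≤ exp n * n ! :=
      (div_le_iff₀ (by positivity)).1 (pow_div_factorial_le_exp (n : ℝ) n.cast_nonneg n)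

lemma truncPoissonPMF_le {A l : ℝ} (hA : 0 < A) (hl : 0 < l) {k i : ℕ} (hki : k ≤ i)
    (hi : A * exp 1 * l ≤ i) :
    truncPoissonPMF k l i ≤ k ! * (A * exp 1) ^ k * A⁻¹ ^ i := by
  obtain ⟨m, rfl⟩ := Nat.exists_eq_add_of_le hki
  have hfk := fk_pos hl k
  have hhead : l ^ k / fk k l ≤ k ! :=
    (div_le_iff₀ hfk).2 <| (div_le_iff₀' (by positivity)).1 (pow_div_factorial_le_fk hl.le k)
  have htail : (A * exp 1 * l) ^ m ≤ exp (k + m : ℕ) * (k + m)! :=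
    (pow_le_pow_left₀ (by positivity) hi m).trans (pow_le_exp_mul_factorial (by omega))
  rw [truncPoissonPMF, if_pos hki]
  calc l ^ (k + m) / (fk k l * (k + m)!)
      = l ^ k / fk k l * ((A * exp 1 * l) ^ m / (k + m)!) / (A * exp 1) ^ m := by
        field_simp; ring
    _ ≤ k ! * (exp (k + m : ℕ) * (k + m)! / (k + m)!) / (A * exp 1) ^ m := by gcongr
    _ = k ! * (A * exp 1) ^ k * A⁻¹ ^ (k + m) := by
        rw [← exp_one_pow, inv_pow]; field_simp; ring

lemma summable_pow_mul_div_pow (p : ℕ) {A B : ℝ} (hB : 0 ≤ B) (hBA : B < A) :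
    Summable fun i : ℕ => (i : ℝ) ^ p * (B / A) ^ i := by
  have hA : 0 < A := hB.trans_lt hBA
  refine summable_pow_mul_geometric_of_norm_lt_one p ?_
  rwa [norm_div, Real.norm_of_nonneg hB, Real.norm_of_nonneg hA.le, div_lt_one hA]

lemma tsum_ite_le_of_le_mul_pow_inv {A B K : ℝ} (hB : 1 ≤ B) (hBA : B < A) (hK : 0 ≤ K)
    (p j : ℕ) {f : ℕ → ℝ} (hf₀ : ∀ i, 0 ≤ f i) (hf : ∀ i, j ≤ i → f i ≤ K * (i ^ p * A⁻¹ ^ i)) :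
    ∑' i, (if j ≤ i then f i else 0) ≤
      K * (∑' i : ℕ, (i : ℝ) ^ p * (B / A) ^ i) * B ^ (-(j : ℤ)) := by
  have hA : 0 < A := by linarith
  have hbound : ∀ i,
      (if j ≤ i then f i else 0) ≤ K * ((i : ℝ) ^ p * (B / A) ^ i) * (B ^ j)⁻¹ := by
    intro i
    split_ifs with hji
    · calc f i ≤ K * (i ^ p * A⁻¹ ^ i) := hf i hji
        _ = K * (i ^ p * (B / A) ^ i) * (B⁻¹ ^ i) := by
          rw [div_pow, inv_pow, inv_pow]
          field_simp
        _ ≤ K * (i ^ p * (B / A) ^ i) * (B ^ j)⁻¹ := by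
          rw [← inv_pow]
          gcongr _ * ?_
          exact pow_le_pow_of_le_one (by positivity) (inv_le_one_of_one_le₀ hB) hji
    · positivity
  have hS' := ((summable_pow_mul_div_pow p (by positivity) hBA).mul_left K).mul_right (B ^ j)⁻¹
  calc ∑' i, (if j ≤ i then f i else 0)
      ≤ ∑' i : ℕ, K * ((i : ℝ) ^ p * (B / A) ^ i) * (B ^ j)⁻¹ :=
        (hS'.of_nonneg_of_le (fun i => by split_ifs <;> simp [hf₀]) hbound).tsum_le_tsum
          hbound hS'
    _ = _ := by rw [tsum_mul_right, tsum_mul_left, zpow_neg, zpow_natCast]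

theorem stmt_4_general (k p : ℕ) (A B : ℝ) (hB : Real.exp 1 < B) (hBA : B < A) :
    ∃ C : ℝ, 0 < C ∧ ∀ (l : ℝ), 0 < l → ∀ j : ℕ,
      A * Real.exp 1 * l ≤ (j : ℝ) → k ≤ j →
      ∑' i : ℕ, (if j ≤ i then
          (Nat.descFactorial i p : ℝ) *
            (if k ≤ i then l ^ i / (fk k l * (Nat.factorial i : ℝ)) else 0)
        else 0) ≤ C * B ^ (-(j : ℤ)) := by
  have hB1 : 1 < B := (one_lt_exp_iff.2 one_pos).trans hB
  have hA : 0 < A := by linarith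
  have hS : 0 < ∑' i : ℕ, (i : ℝ) ^ p * (B / A) ^ i :=
    (summable_pow_mul_div_pow p (by positivity) hBA).tsum_pos (fun i => by positivity) 1
      (by simp; positivity)
  refine ⟨k ! * (A * exp 1) ^ k * ∑' i : ℕ, (i : ℝ) ^ p * (B / A) ^ i,
    mul_pos (by positivity) hS, fun l hl j hj hkj => ?_⟩
  refine tsum_ite_le_of_le_mul_pow_inv hB1.le hBA (by positivity) p j
    (fun i => mul_nonneg (by positivity) (truncPoissonPMF_nonneg hl k i)) (fun i hji => ?_)
  have hi : A * exp 1 * l ≤ i := hj.trans (cast_le.2 hji)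
  calc (i.descFactorial p : ℝ) * truncPoissonPMF k l i
      ≤ i ^ p * (k ! * (A * exp 1) ^ k * A⁻¹ ^ i) :=
        mul_le_mul (by exact_mod_cast i.descFactorial_le_pow p)
          (truncPoissonPMF_le hA hl (hkj.trans hji) hi) (truncPoissonPMF_nonneg hl k i)
          (by positivity)
    _ = _ := by ring

/-- Tail bound for the `k`-truncated Poisson distribution: with constants `A > B > e` and
`A/e ≥ B`, and `p` a fixed nonnegative integer, there is a constant `C` (depending only on
`A, B, p, k`) such that for all `λ > 0` and all integers `j ≥ max{Aeλ, k}`,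
`E[[Y]_p · 1_{Y ≥ j}] ≤ C B^{-j}`. -/
theorem stmt_4 (k p : ℕ) (A B : ℝ) (hB : Real.exp 1 < B) (hBA : B < A)
    (hAe : B ≤ A / Real.exp 1) :
    ∃ C : ℝ, 0 < C ∧ ∀ (l : ℝ), 0 < l → ∀ j : ℕ,
      A * Real.exp 1 * l ≤ (j : ℝ) → k ≤ j →
      ∑' i : ℕ, (if j ≤ i then
          (Nat.descFactorial i p : ℝ) *
            (if k ≤ i then l ^ i / (fk k l * (Nat.factorial i : ℝ)) else 0)
        else 0) ≤ C * B ^ (-(j : ℤ)) :=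
  stmt_4_general k p A B hB hBA
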